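/- Let $\Phi_2(\rho) = \frac{3}{2\rho^3}(2\rho - 3 + 4e^{-\rho} - e^{-2\rho})$ for $\rho \neq 0$ and $\Phi_2(0) = 1$. Then $\Phi_2(\rho) > 0$ for all $\rho \in \mathbb{R}$. -/

import Mathlib

/-!
The numerator `g ρ = 2ρ - 3 + 4e^{-ρ} - e^{-2ρ}` satisfies `g 0 = 0` and
`g' ρ = 2(1 - e^{-ρ})²`, which vanishes only at `0`; so `g` is strictly increasing and has the
sign of `ρ`, as does the denominator `2ρ³`.
-/

open Real Set

theorem strictMono_of_hasDerivAt_pos_of_ne {f f' : ℝ → ℝ} {a : ℝ}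
    (hf : ∀ x, HasDerivAt f (f' x) x) (hf' : ∀ x ≠ a, 0 < f' x) : StrictMono f := by
  have hcont : Continuous f := continuous_iff_continuousAt.2 fun x ↦ (hf x).continuousAt
  refine StrictMonoOn.Iic_union_Ici (a := a) ?_ ?_
  · refine strictMonoOn_of_hasDerivWithinAt_pos (convex_Iic a) hcont.continuousOn
      (fun x _ ↦ (hf x).hasDerivWithinAt) fun x hx ↦ hf' x ?_
    rw [interior_Iic] at hx
    exact hx.ne
  · refine strictMonoOn_of_hasDerivWithinAt_pos (convex_Ici a) hcont.continuousOn
      (fun x _ ↦ (hf x).hasDerivWithinAt) fun x hx ↦ hf' x ?_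
    rw [interior_Ici] at hx
    exact hx.ne'

noncomputable def phi2Numerator (ρ : ℝ) : ℝ :=
  2 * ρ - 3 + 4 * exp (-ρ) - exp (-(2 * ρ))

theorem phi2Numerator_zero : phi2Numerator 0 = 0 := by
  norm_num [phi2Numerator]

theorem hasDerivAt_phi2Numerator (ρ : ℝ) :
    HasDerivAt phi2Numerator (2 * (1 - exp (-ρ)) ^ 2) ρ := by
  have hexp : exp (-(2 * ρ)) = exp (-ρ) ^ 2 := by
    rw [← exp_nat_mul]; ring_nf
  have h : HasDerivAt phi2Numerator
      (2 * 1 - 0 + 4 * (exp (-ρ) * -1) - exp (-(2 * ρ)) * -(2 * 1)) ρ :=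
    ((((hasDerivAt_id' ρ).const_mul 2).sub (hasDerivAt_const ρ 3)).add
      ((hasDerivAt_id' ρ).neg.exp.const_mul 4)).sub ((hasDerivAt_id' ρ).const_mul 2).neg.exp
  exact h.congr_deriv (by rw [hexp]; ring)

theorem strictMono_phi2Numerator : StrictMono phi2Numerator :=
  strictMono_of_hasDerivAt_pos_of_ne (a := 0) hasDerivAt_phi2Numerator fun x hx ↦ by
    have hexp : exp (-x) ≠ 1 := by simpa using hx
    have : 1 - exp (-x) ≠ 0 := sub_ne_zero.2 hexp.symm
    positivity

/-- `Φ₂(ρ) = (3/(2ρ³))(2ρ - 3 + 4e^{-ρ} - e^{-2ρ})` for `ρ ≠ 0`, `Φ₂(0) = 1`,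
is positive on all of `ℝ`. -/
theorem phi2_pos (Φ₂ : ℝ → ℝ)
    (h : ∀ ρ : ℝ, ρ ≠ 0 →
      Φ₂ ρ = 3 / (2 * ρ ^ 3) * (2 * ρ - 3 + 4 * Real.exp (-ρ) - Real.exp (-(2 * ρ))))
    (h0 : Φ₂ 0 = 1) :
    ∀ ρ : ℝ, 0 < Φ₂ ρ := by
  intro ρ
  rcases lt_trichotomy ρ 0 with hρ | rfl | hρ
  · have hnum : phi2Numerator ρ < 0 := phi2Numerator_zero ▸ strictMono_phi2Numerator hρ
    have hden : 2 * ρ ^ 3 < 0 := mul_neg_of_pos_of_neg two_pos (Odd.pow_neg ⟨1, rfl⟩ hρ)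
    rw [h ρ hρ.ne]
    exact mul_pos_of_neg_of_neg (div_neg_of_pos_of_neg three_pos hden) hnum
  · simp [h0]
  · have hnum : 0 < phi2Numerator ρ := phi2Numerator_zero ▸ strictMono_phi2Numerator hρ
    rw [h ρ hρ.ne']
    exact mul_pos (by positivity) hnum
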